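/- Let X be a finite set and let i, r : X → X be involutions. If an ir class C has at least two elements, then no element of C is fixed by both i and r, and the number of elements z ∈ C satisfying i(z) = z or r(z) = z is either 0 or exactly 2. -/

import Mathlib

/-- The relation generated by introduction/removal partners: `a` is related to `b`
if `b` is the `i`-partner or the `r`-partner of `a`. -/
def irRel {X : Type*} (i r : X → X) : X → X → Prop :=
  fun a b => i a = b ∨ r a = b

/-- The ir class of `x`: the equivalence class of `x` under the equivalence relation
generated by `x ∼ i x` and `x ∼ r x`. -/
def irClass {X : Type*} (i r : X → X) (x : X) : Set X :=
  {y | Relation.EqvGen (irRel i r) x y}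

/-!
Write `σ = i ∘ r`. If `a` is fixed by `i`, then `i (σ^k a) = σ^(-k) a` and `r (σ^k a) = σ^(-k-1) a`,
so the class of `a` is the `σ`-orbit of `a`; if `m` is its period, `σ^k a` is fixed by `i` or by `r`
exactly when `m ∣ 2k` or `m ∣ 2k + 1`, that is, when `k ≡ 0` or `k ≡ ⌊m/2⌋ (mod m)`. A point fixed by
both `i` and `r` is a class on its own, so in a class with two elements `m ≥ 2` and these residues
give two distinct points.
-/

open Function MulAction Set

section irClass

variable {X : Type*} {i r : X → X}

theorem mem_irClass_self (i r : X → X) (x : X) : x ∈ irClass i r x :=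
  Relation.EqvGen.refl x

theorem mem_irClass_of_irRel {x y z : X} (hy : y ∈ irClass i r x) (hyz : irRel i r y z) :
    z ∈ irClass i r x :=
  hy.trans _ _ _ (.rel _ _ hyz)

theorem irClass_eq_of_mem {x z : X} (hz : z ∈ irClass i r x) :
    irClass i r z = irClass i r x := by
  ext y
  exact ⟨hz.trans _ _ _, (hz.symm _ _).trans _ _ _⟩

theorem irClass_comm (i r : X → X) (x : X) : irClass r i x = irClass i r x := by
  ext y
  exact ⟨Relation.EqvGen.mono (fun _ _ => Or.symm) _ _,
    Relation.EqvGen.mono (fun _ _ => Or.symm) _ _⟩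

theorem irClass_subset_of_mapsTo (hi : Involutive i) (hr : Involutive r) {S : Set X}
    (hiS : MapsTo i S S) (hrS : MapsTo r S S) {x : X} (hx : x ∈ S) : irClass i r x ⊆ S := by
  have hS : Equivalence fun a b : X => (a ∈ S ↔ b ∈ S) := ⟨fun _ => Iff.rfl, Iff.symm, Iff.trans⟩
  have step (a b : X) : irRel i r a b → (a ∈ S ↔ b ∈ S) := by
    rintro (rfl | rfl)
    · exact ⟨(hiS ·), fun h => hi a ▸ hiS h⟩
    · exact ⟨(hrS ·), fun h => hr a ▸ hrS h⟩
  exact fun y hy => (hS.eqvGen_iff.1 (hy.mono step _ _)).1 hx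

theorem irClass_eq_singleton (hi : Involutive i) (hr : Involutive r) {x : X} (hix : i x = x)
    (hrx : r x = x) : irClass i r x = {x} :=
  (irClass_subset_of_mapsTo hi hr (Set.mapsTo_singleton.2 hix) (Set.mapsTo_singleton.2 hrx)
    rfl).antisymm (Set.singleton_subset_iff.2 (mem_irClass_self i r x))

theorem not_fixed_by_both_of_two_le_ncard (hi : Involutive i) (hr : Involutive r) {x z : X}
    (h2 : 2 ≤ (irClass i r x).ncard) (hz : z ∈ irClass i r x) : ¬(i z = z ∧ r z = z) := by
  rintro ⟨hiz, hrz⟩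
  rw [← irClass_eq_of_mem hz, irClass_eq_singleton hi hr hiz hrz, Set.ncard_singleton] at h2
  omega

end irClass

theorem Int.natCast_dvd_two_mul_or_two_mul_add_one_iff {m : ℕ} {k : ℤ} :
    (m : ℤ) ∣ 2 * k ∨ (m : ℤ) ∣ 2 * k + 1 ↔ (m : ℤ) ∣ k ∨ (m : ℤ) ∣ k - (m / 2 : ℕ) := by
  obtain ⟨n, rfl | rfl⟩ := Nat.even_or_odd' m
  · rw [show 2 * n / 2 = n by omega]
    push_cast
    have h_odd : ¬(2 * n : ℤ) ∣ 2 * k + 1 := fun h => by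
      have := (dvd_mul_right (2 : ℤ) n).trans h
      omega
    rw [or_iff_left h_odd, mul_dvd_mul_iff_left two_ne_zero]
    constructor
    · rintro ⟨t, rfl⟩
      obtain ⟨u, rfl | rfl⟩ := Int.even_or_odd' t
      · exact Or.inl ⟨u, by ring⟩
      · exact Or.inr ⟨u, by ring⟩
    · rintro (h | h)
      · exact (dvd_mul_left _ 2).trans h
      · exact dvd_sub_self_right.1 ((dvd_mul_left _ 2).trans h)
  · rw [show (2 * n + 1) / 2 = n by omega]
    push_cast
    have hcop : IsCoprime (2 * n + 1 : ℤ) 2 := ⟨1, -n, by ring⟩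
    have h_cancel (j : ℤ) : (2 * n + 1 : ℤ) ∣ 2 * j ↔ (2 * n + 1 : ℤ) ∣ j :=
      ⟨hcop.dvd_of_dvd_mul_left, (·.mul_left 2)⟩
    rw [show 2 * k + 1 = 2 * (k - n) + (2 * n + 1) by ring, dvd_add_self_right, h_cancel,
      h_cancel]

theorem MulAction.zpow_smul_eq_zpow_smul_iff {G X : Type*} [Group G] [MulAction G X] {g : G}
    {x : X} {j k : ℤ} : g ^ j • x = g ^ k • x ↔ (period g x : ℤ) ∣ j - k := by
  rw [← zpow_smul_eq_iff_period_dvd, sub_eq_neg_add, zpow_add, mul_smul, zpow_neg,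
    inv_smul_eq_iff]

section Reflections

variable {G : Type*} [Group G] {s t : G}

theorem semiconjBy_zpow_mul_left (hs : s * s = 1) (ht : t * t = 1) (k : ℤ) :
    SemiconjBy s ((s * t) ^ k) ((s * t) ^ (-k)) := by
  have h : SemiconjBy s (s * t) (s * t)⁻¹ := by
    rw [SemiconjBy, mul_inv_rev, inv_mul_cancel_right, ← mul_assoc, hs, one_mul,
      inv_eq_of_mul_eq_one_right ht]
  simpa only [inv_zpow'] using h.zpow_right k

theorem semiconjBy_zpow_mul_right (hs : s * s = 1) (ht : t * t = 1) (k : ℤ) :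
    SemiconjBy t ((s * t) ^ k) ((s * t) ^ (-k)) := by
  have h : SemiconjBy t (s * t) (s * t)⁻¹ := by
    rw [SemiconjBy, mul_inv_rev, inv_eq_of_mul_eq_one_right hs, inv_eq_of_mul_eq_one_right ht,
      mul_assoc]
  simpa only [inv_zpow'] using h.zpow_right k

variable {X : Type*} [MulAction G X] {a : X}

theorem pow_smul_mem_irClass (s t : G) (a : X) (n : ℕ) :
    (s * t) ^ n • a ∈ irClass (s • ·) (t • ·) a := by
  induction n with
  | zero => simpa only [pow_zero, one_smul] using mem_irClass_self _ _ a
  | succ n ih =>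
    rw [pow_succ', mul_smul, mul_smul]
    exact mem_irClass_of_irRel (mem_irClass_of_irRel ih (Or.inr rfl)) (Or.inl rfl)

theorem smul_eq_zpow_neg_one_smul (hs : s * s = 1) (ht : t * t = 1) (ha : s • a = a) :
    t • a = (s * t) ^ (-1 : ℤ) • a := by
  rw [zpow_neg_one, mul_inv_rev, inv_eq_of_mul_eq_one_right hs, inv_eq_of_mul_eq_one_right ht,
    mul_smul, ha]

theorem irClass_subset_zpow_smul (hs : s * s = 1) (ht : t * t = 1) (ha : s • a = a) :
    irClass (s • ·) (t • ·) a ⊆ {z | ∃ k : ℤ, (s * t) ^ k • a = z} := by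
  have hinv {g : G} (hg : g * g = 1) : Involutive (g • · : X → X) := fun x => by
    simp only [smul_smul, hg, one_smul]
  refine irClass_subset_of_mapsTo (hinv hs) (hinv ht) ?_ ?_ ⟨0, by rw [zpow_zero, one_smul]⟩
  · rintro _ ⟨k, rfl⟩
    exact ⟨-k, by dsimp only; rw [smul_smul, (semiconjBy_zpow_mul_left hs ht k).eq, mul_smul, ha]⟩
  · rintro _ ⟨k, rfl⟩
    exact ⟨-k + -1, by
      dsimp only
      rw [smul_smul, (semiconjBy_zpow_mul_right hs ht k).eq, mul_smul, smul_eq_zpow_neg_one_smul hs ht ha,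
        smul_smul, ← zpow_add]⟩

theorem smul_zpow_mul_smul_eq_iff_left (hs : s * s = 1) (ht : t * t = 1) (ha : s • a = a)
    (k : ℤ) : s • (s * t) ^ k • a = (s * t) ^ k • a ↔ (period (s * t) a : ℤ) ∣ 2 * k := by
  rw [smul_smul, (semiconjBy_zpow_mul_left hs ht k).eq, mul_smul, ha,
    zpow_smul_eq_zpow_smul_iff, show -k - k = -(2 * k) by ring, Int.dvd_neg]

theorem smul_zpow_mul_smul_eq_iff_right (hs : s * s = 1) (ht : t * t = 1) (ha : s • a = a)
    (k : ℤ) : t • (s * t) ^ k • a = (s * t) ^ k • a ↔ (period (s * t) a : ℤ) ∣ 2 * k + 1 := by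
  rw [smul_smul, (semiconjBy_zpow_mul_right hs ht k).eq, mul_smul,
    smul_eq_zpow_neg_one_smul hs ht ha, smul_smul, ← zpow_add, zpow_smul_eq_zpow_smul_iff,
    show -k + -1 - k = -(2 * k + 1) by ring, Int.dvd_neg]

theorem fixed_zpow_mul_smul_iff (hs : s * s = 1) (ht : t * t = 1) (ha : s • a = a) (k : ℤ) :
    (s • (s * t) ^ k • a = (s * t) ^ k • a ∨ t • (s * t) ^ k • a = (s * t) ^ k • a) ↔
      (s * t) ^ k • a = a ∨ (s * t) ^ k • a = (s * t) ^ (period (s * t) a / 2) • a := by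
  rw [smul_zpow_mul_smul_eq_iff_left hs ht ha, smul_zpow_mul_smul_eq_iff_right hs ht ha,
    Int.natCast_dvd_two_mul_or_two_mul_add_one_iff, ← zpow_natCast, zpow_smul_eq_zpow_smul_iff,
    zpow_smul_eq_iff_period_dvd]

theorem setOf_fixed_irClass_smul_eq_pair (hs : s * s = 1) (ht : t * t = 1) (ha : s • a = a) :
    {z ∈ irClass (s • ·) (t • ·) a | s • z = z ∨ t • z = z} =
      {a, (s * t) ^ (period (s * t) a / 2) • a} := by
  ext z
  constructor
  · rintro ⟨hz, hfix⟩
    obtain ⟨k, rfl⟩ := irClass_subset_zpow_smul hs ht ha hz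
    exact (fixed_zpow_mul_smul_iff hs ht ha k).1 hfix
  · rintro (rfl | rfl)
    · exact ⟨mem_irClass_self _ _ z, Or.inl ha⟩
    · refine ⟨pow_smul_mem_irClass s t a _, ?_⟩
      simpa only [zpow_natCast] using (fixed_zpow_mul_smul_iff hs ht ha
        (period (s * t) a / 2 : ℕ)).2 (Or.inr (by rw [zpow_natCast]))

theorem ncard_setOf_fixed_irClass_smul (hs : s * s = 1) (ht : t * t = 1) (ha : s • a = a)
    (hm : 2 ≤ period (s * t) a) :
    {z ∈ irClass (s • ·) (t • ·) a | s • z = z ∨ t • z = z}.ncard = 2 := by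
  rw [setOf_fixed_irClass_smul_eq_pair hs ht ha, Set.ncard_pair]
  intro h
  have := Nat.le_of_dvd (by omega) (pow_smul_eq_iff_period_dvd.1 h.symm)
  omega

theorem two_le_period_mul (hs : s * s = 1) (ha : s • a = a) (hta : t • a ≠ a)
    (hpos : 0 < period (s * t) a) : 2 ≤ period (s * t) a := by
  by_contra! h
  have hrot := pow_period_smul (s * t) a
  rw [show period (s * t) a = 1 by omega, pow_one, mul_smul] at hrot
  apply hta
  calc t • a = s • s • t • a := by rw [smul_smul, hs, one_smul]
    _ = a := by rw [hrot, ha]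

end Reflections

theorem ncard_setOf_fixed_irClass {X : Type*} [Finite X] {i r : X → X} (hi : Involutive i)
    (hr : Involutive r) {a : X} (ha : i a = a) (h2 : 2 ≤ (irClass i r a).ncard) :
    {z ∈ irClass i r a | i z = z ∨ r z = z}.ncard = 2 := by
  have hs : hi.toPerm i * hi.toPerm i = 1 := Equiv.ext hi
  have ht : hr.toPerm r * hr.toPerm r = 1 := Equiv.ext hr
  have hra : r a ≠ a := fun h => not_fixed_by_both_of_two_le_ncard hi hr h2
    (mem_irClass_self i r a) ⟨ha, h⟩
  have hsmul (f : X → X) (hf : Involutive f) : (hf.toPerm f • · : X → X) = f := rfl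
  have key := ncard_setOf_fixed_irClass_smul hs ht ha
    (two_le_period_mul hs ha hra (period_pos_of_orderOf_pos (orderOf_pos _) a))
  rwa [hsmul i hi, hsmul r hr] at key

/-- If an ir class `C` has at least two elements, then no element of `C` is fixed by
both `i` and `r`, and the number of elements `z ∈ C` with `i z = z` or `r z = z`
is either `0` or exactly `2`. -/
theorem ir_class_fixed_count {X : Type*} [Fintype X] (i r : X → X)
    (hi : Function.Involutive i) (hr : Function.Involutive r)
    (C : Set X) (hC : ∃ x, C = irClass i r x) (h2 : 2 ≤ C.ncard) :
    (∀ z ∈ C, ¬(i z = z ∧ r z = z)) ∧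
    (({z ∈ C | i z = z ∨ r z = z}).ncard = 0 ∨
      ({z ∈ C | i z = z ∨ r z = z}).ncard = 2) := by
  obtain ⟨x, rfl⟩ := hC
  refine ⟨fun z hz => not_fixed_by_both_of_two_le_ncard hi hr h2 hz, ?_⟩
  obtain hempty | ⟨a, ha, hfix⟩ := Set.eq_empty_or_nonempty {z ∈ irClass i r x | i z = z ∨ r z = z}
  · exact Or.inl (by rw [hempty, Set.ncard_empty])
  right
  rw [← irClass_eq_of_mem ha] at h2 ⊢
  rcases hfix with hia | hra
  · exact ncard_setOf_fixed_irClass hi hr hia h2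
  · rw [← irClass_comm i r a] at h2 ⊢
    simpa only [or_comm] using ncard_setOf_fixed_irClass hr hi hra h2
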